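/- arXiv:1101.5975 — 2 statements merged into one kernel-verified Lean document; each statement's English description precedes it below -/
import Mathlib

section
/- For a smooth function G on ℝ² with G = k_0 + k_1 q¹ + k_2 q² where k_1 k_2 ≠ 0, the potential V(q¹,q²) = mL_0[(q¹ + k_0/(2k_1))² + (q² + k_0/(2k_2))²] + F(k_1 q² - k_2 q¹) satisfies the compatibility equation ∇V·∇G = 2mL_0 G (the case c = 0 of the compatibility condition), for any differentiable F : ℝ → ℝ. -/
/-!
Since `∇G = (k₁, k₂)` is constant, `∇V·∇G` is the derivative of `V` in the direction `(k₁, k₂)`.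
Along that direction `k₁q² - k₂q¹`, hence the `F`-term, is constant, while the quadratic part has
derivative `2mL₀[(q¹ + k₀/(2k₁))k₁ + (q² + k₀/(2k₂))k₂] = 2mL₀G`.
-/

/-- Partial derivative with respect to the first coordinate. -/
noncomputable def pd1 (f : ℝ × ℝ → ℝ) : ℝ × ℝ → ℝ :=
  fun p => deriv (fun s => f (s, p.2)) p.1

/-- Partial derivative with respect to the second coordinate. -/
noncomputable def pd2 (f : ℝ × ℝ → ℝ) : ℝ × ℝ → ℝ :=
  fun p => deriv (fun s => f (p.1, s)) p.2

section PartialDerivatives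

variable {f : ℝ × ℝ → ℝ} {p : ℝ × ℝ}

theorem pd1_eq_fderiv (hf : DifferentiableAt ℝ f p) : pd1 f p = fderiv ℝ f p (1, 0) :=
  (hf.hasFDerivAt.comp_hasDerivAt p.1 ((hasDerivAt_id p.1).prodMk (hasDerivAt_const p.1 p.2))).deriv

theorem pd2_eq_fderiv (hf : DifferentiableAt ℝ f p) : pd2 f p = fderiv ℝ f p (0, 1) :=
  (hf.hasFDerivAt.comp_hasDerivAt p.2 ((hasDerivAt_const p.2 p.1).prodMk (hasDerivAt_id p.2))).deriv

theorem pd1_mul_add_pd2_mul_eq_lineDeriv (hf : DifferentiableAt ℝ f p) (a b : ℝ) :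
    pd1 f p * a + pd2 f p * b = lineDeriv ℝ f p (a, b) := by
  have hab : ((a, b) : ℝ × ℝ) = a • (1, 0) + b • (0, 1) := by simp
  rw [hf.lineDeriv_eq_fderiv, pd1_eq_fderiv hf, pd2_eq_fderiv hf, hab, map_add, map_smul, map_smul,
    smul_eq_mul, smul_eq_mul, mul_comm a, mul_comm b]

end PartialDerivatives

theorem pd1_affine (k₀ k₁ k₂ : ℝ) (p : ℝ × ℝ) :
    pd1 (fun q => k₀ + k₁ * q.1 + k₂ * q.2) p = k₁ := by
  simp [pd1]

theorem pd2_affine (k₀ k₁ k₂ : ℝ) (p : ℝ × ℝ) :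
    pd2 (fun q => k₀ + k₁ * q.1 + k₂ * q.2) p = k₂ := by
  simp [pd2]

noncomputable def flatPotential (m L₀ k₀ k₁ k₂ : ℝ) (F : ℝ → ℝ) (q : ℝ × ℝ) : ℝ :=
  m * L₀ * ((q.1 + k₀ / (2 * k₁)) ^ 2 + (q.2 + k₀ / (2 * k₂)) ^ 2) + F (k₁ * q.2 - k₂ * q.1)

theorem differentiable_flatPotential (m L₀ k₀ k₁ k₂ : ℝ) {F : ℝ → ℝ} (hF : Differentiable ℝ F) :
    Differentiable ℝ (flatPotential m L₀ k₀ k₁ k₂ F) := by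
  unfold flatPotential; fun_prop

theorem hasLineDerivAt_flatPotential (m L₀ k₀ k₁ k₂ : ℝ) (F : ℝ → ℝ) (p : ℝ × ℝ) :
    HasLineDerivAt ℝ (flatPotential m L₀ k₀ k₁ k₂ F)
      (m * L₀ * (2 * (p.1 + k₀ / (2 * k₁)) * k₁ + 2 * (p.2 + k₀ / (2 * k₂)) * k₂)) p (k₁, k₂) := by
  set a := p.1 + k₀ / (2 * k₁)
  set b := p.2 + k₀ / (2 * k₂)
  have hline : (fun t : ℝ => flatPotential m L₀ k₀ k₁ k₂ F (p + t • (k₁, k₂))) =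
      fun t => m * L₀ * ((a + t * k₁) ^ 2 + (b + t * k₂) ^ 2) + F (k₁ * p.2 - k₂ * p.1) := by
    funext t
    simp only [flatPotential, Prod.fst_add, Prod.snd_add, Prod.smul_mk, smul_eq_mul, a, b]
    ring_nf
  unfold HasLineDerivAt
  rw [hline]
  have hsq : ∀ c k : ℝ, HasDerivAt (fun t : ℝ => (c + t * k) ^ 2) (2 * c * k) 0 := by
    intro c k
    simpa using (((hasDerivAt_id (0 : ℝ)).mul_const k).const_add c).fun_pow 2
  exact (((hsq a k₁).add (hsq b k₂)).const_mul (m * L₀)).add_const _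

/-- In the flat case `c = 0`, with `G = k₀ + k₁q¹ + k₂q²`, `k₁k₂ ≠ 0`, the
potential `V = mL₀[(q¹ + k₀/(2k₁))² + (q² + k₀/(2k₂))²] + F(k₁q² - k₂q¹)`
satisfies the compatibility equation `∇V·∇G = 2mL₀G`. -/
theorem flat_potential_compatibility (m L₀ k₀ k₁ k₂ : ℝ) (hk : k₁ * k₂ ≠ 0)
    (F : ℝ → ℝ) (hF : Differentiable ℝ F)
    (G V : ℝ × ℝ → ℝ)
    (hG : ∀ p : ℝ × ℝ, G p = k₀ + k₁ * p.1 + k₂ * p.2)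
    (hV : ∀ p : ℝ × ℝ, V p =
      m * L₀ * ((p.1 + k₀ / (2 * k₁)) ^ 2 + (p.2 + k₀ / (2 * k₂)) ^ 2)
        + F (k₁ * p.2 - k₂ * p.1)) :
    ∀ p : ℝ × ℝ, pd1 V p * pd1 G p + pd2 V p * pd2 G p = 2 * m * L₀ * G p := by
  obtain ⟨hk₁, hk₂⟩ := mul_ne_zero_iff.mp hk
  obtain rfl : G = fun q => k₀ + k₁ * q.1 + k₂ * q.2 := funext hG
  obtain rfl : V = flatPotential m L₀ k₀ k₁ k₂ F := funext hV
  intro p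
  rw [pd1_affine, pd2_affine,
    pd1_mul_add_pd2_mul_eq_lineDeriv (differentiable_flatPotential m L₀ k₀ k₁ k₂ hF p),
    (hasLineDerivAt_flatPotential m L₀ k₀ k₁ k₂ F p).lineDeriv]
  field_simp
  ring
end

section
/- On the pseudosphere with metric dη² + cosh²η dξ², with G = a₁(e^{-η} − e^{η}) = −2a₁ sinh η and V = F(ξ)/cosh²η for any differentiable F, the compatibility equation ∂_ηV ∂_ηG + (1/cosh²η) ∂_ξV ∂_ξG = −2VG holds (case mc = −1, L₀ = 0). -/
/-! Writing `G = -2a₁ sinh η`, we get `∂_ξG = 0` and `∂_ηG = -2a₁ cosh η`, while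
`∂_ηV = -2F(ξ) sinh η / cosh³η`; the left-hand side collapses to
`4a₁F(ξ) sinh η / cosh²η = -2VG`. -/

open Real

lemma pd1_eq_of_hasDerivAt {f : ℝ × ℝ → ℝ} {g : ℝ → ℝ} {p : ℝ × ℝ} {c : ℝ}
    (hfg : ∀ s, f (s, p.2) = g s) (hg : HasDerivAt g c p.1) : pd1 f p = c := by
  rw [pd1, funext hfg]
  exact hg.deriv

lemma pd2_eq_zero_of_eq_comp_fst {f : ℝ × ℝ → ℝ} {g : ℝ → ℝ} (hfg : ∀ p, f p = g p.1)
    (p : ℝ × ℝ) : pd2 f p = 0 := by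
  simp [pd2, hfg]

lemma exp_neg_sub_exp (x : ℝ) : exp (-x) - exp x = -2 * sinh x := by
  rw [sinh_eq]
  ring

lemma hasDerivAt_const_div_cosh_sq (c x : ℝ) :
    HasDerivAt (fun s => c / cosh s ^ 2) (-2 * c * sinh x / cosh x ^ 3) x := by
  have hcosh : cosh x ≠ 0 := (cosh_pos x).ne'
  refine ((hasDerivAt_const x c).fun_div ((hasDerivAt_cosh x).fun_pow 2)
    (pow_ne_zero 2 hcosh)).congr_deriv ?_
  push_cast
  field_simp
  ring

theorem pseudosphere_potential_compatibility_general (a₁ : ℝ)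
    (F : ℝ → ℝ)
    (G V : ℝ × ℝ → ℝ)
    (hG : ∀ p : ℝ × ℝ, G p = a₁ * (Real.exp (-p.1) - Real.exp p.1))
    (hV : ∀ p : ℝ × ℝ, V p = F p.2 / (Real.cosh p.1) ^ 2) :
    ∀ p : ℝ × ℝ,
      pd1 V p * pd1 G p + (1 / (Real.cosh p.1) ^ 2) * pd2 V p * pd2 G p
        = -2 * V p * G p := by
  have hG_sinh (p : ℝ × ℝ) : G p = -2 * a₁ * sinh p.1 := by
    rw [hG, exp_neg_sub_exp]
    ring
  rintro ⟨η, ξ⟩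
  have hV_η : pd1 V (η, ξ) = -2 * F ξ * sinh η / cosh η ^ 3 :=
    pd1_eq_of_hasDerivAt (fun s => hV (s, ξ)) (hasDerivAt_const_div_cosh_sq (F ξ) η)
  have hG_η : pd1 G (η, ξ) = -2 * a₁ * cosh η :=
    pd1_eq_of_hasDerivAt (fun s => hG_sinh (s, ξ)) ((hasDerivAt_sinh η).const_mul _)
  have hG_ξ : pd2 G (η, ξ) = 0 :=
    pd2_eq_zero_of_eq_comp_fst (g := fun η => -2 * a₁ * sinh η) hG_sinh _
  have hcosh : cosh η ≠ 0 := (cosh_pos η).ne'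
  rw [hV_η, hG_η, hG_ξ, hV, hG_sinh]
  field_simp
  ring

/-- On the pseudosphere with metric `dη² + cosh²η dξ²`, with
`G = a₁(e^{-η} - e^{η}) = -2a₁ sinh η` and `V = F(ξ)/cosh²η`, the
compatibility equation `∂_ηV ∂_ηG + (1/cosh²η) ∂_ξV ∂_ξG = -2VG` holds
(case `mc = -1`, `L₀ = 0`). -/
theorem pseudosphere_potential_compatibility (a₁ : ℝ)
    (F : ℝ → ℝ) (hF : Differentiable ℝ F)
    (G V : ℝ × ℝ → ℝ)
    (hG : ∀ p : ℝ × ℝ, G p = a₁ * (Real.exp (-p.1) - Real.exp p.1))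
    (hV : ∀ p : ℝ × ℝ, V p = F p.2 / (Real.cosh p.1) ^ 2) :
    ∀ p : ℝ × ℝ,
      pd1 V p * pd1 G p + (1 / (Real.cosh p.1) ^ 2) * pd2 V p * pd2 G p
        = -2 * V p * G p :=
  pseudosphere_potential_compatibility_general a₁ F G V hG hV
end
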